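/- arXiv:0808.3597 — 5 statements merged into one kernel-verified Lean document; each statement's English description precedes it below -/
import Mathlib

section
/- Let p be a permutation of Z_d with p(0) = 0 and let ρ be a bipartite density supported in M_p. Then ρ is PPT if and only if for every y ∈ Z_d the d×d matrix B^y with entries B^y_{j,k} = ρ_{j (y−p(k)), k (y−p(j))} (j,k ∈ Z_d) is positive semidefinite. -/
open scoped ComplexOrder

/-!
After the shear `(j₁, j₂) ↦ (j₁, j₂ + p j₁)` the support condition on `ρ` says that `ρ^τ`
only connects indices with the same second coordinate `y`, and the block of `ρ^τ` at `y` is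
`B^y`. So `ρ^τ` is a reindexed block-diagonal matrix, which is positive semidefinite iff
each of its blocks is.
-/

def Equiv.addShear {G : Type*} [AddGroup G] (p : G → G) : G × G ≃ G × G :=
  Equiv.prodShear (Equiv.refl G) fun j => Equiv.addRight (p j)

namespace Matrix

section BlockDiagonal

variable {n o R : Type*} [Fintype n] [Fintype o] [DecidableEq o]

theorem dotProduct_blockDiagonal_mulVec [NonUnitalNonAssocSemiring R] [Star R]
    (B : o → Matrix n n R) (x : n × o → R) :
    star x ⬝ᵥ (blockDiagonal B *ᵥ x) =
      ∑ k, star (fun i => x (i, k)) ⬝ᵥ (B k *ᵥ fun i => x (i, k)) := by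
  simp only [dotProduct, mulVec, Fintype.sum_prod_type, Pi.star_apply, blockDiagonal_apply,
    ite_mul, zero_mul, Finset.sum_ite_eq, Finset.mem_univ, if_true]
  exact Finset.sum_comm

theorem posSemidef_blockDiagonal_iff
    [Ring R] [PartialOrder R] [StarRing R] [StarOrderedRing R] {B : o → Matrix n n R} :
    (blockDiagonal B).PosSemidef ↔ ∀ k, (B k).PosSemidef := by
  refine ⟨fun h k => ?_, fun h => ?_⟩
  · convert h.submatrix fun i : n => (i, k)
    ext i j
    simp [blockDiagonal_apply]
  · refine .of_dotProduct_mulVec_nonneg (isHermitian_blockDiagonal_iff.mpr fun k => (h k).1)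
      fun x => ?_
    rw [dotProduct_blockDiagonal_mulVec]
    exact Finset.sum_nonneg fun k _ => (h k).dotProduct_mulVec_nonneg _

end BlockDiagonal

def partialTranspose {m n α : Type*} (ρ : Matrix (m × n) (m × n) α) :
    Matrix (m × n) (m × n) α :=
  of fun jk uv => ρ (jk.1, uv.2) (uv.1, jk.2)

variable {G α : Type*} [AddCommGroup G] [DecidableEq G] [Zero α]

theorem partialTranspose_eq_submatrix_blockDiagonal (p : G → G)
    (ρ : Matrix (G × G) (G × G) α)
    (hsupp : ∀ j1 j2 k1 k2 : G, j2 - p j1 ≠ k2 - p k1 → ρ (j1, j2) (k1, k2) = 0) :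
    partialTranspose ρ =
      (blockDiagonal fun y => of fun j k => ρ (j, y - p k) (k, y - p j)).submatrix
        (Equiv.addShear p) (Equiv.addShear p) := by
  ext ⟨j1, j2⟩ ⟨k1, k2⟩
  simp only [partialTranspose, Equiv.addShear, of_apply, submatrix_apply, blockDiagonal_apply,
    Equiv.prodShear_apply, Equiv.coe_refl, id_eq, Equiv.coe_addRight]
  split_ifs with h
  · rw [h, add_sub_cancel_right, ← h, add_sub_cancel_right]
  · exact hsupp _ _ _ _ fun hc => h (sub_eq_sub_iff_add_eq_add.mp hc).symm

end Matrix

theorem ppt_iff_blocks_general (d : ℕ) [NeZero d]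
    (p : Equiv.Perm (ZMod d))
    (ρ : Matrix (ZMod d × ZMod d) (ZMod d × ZMod d) ℂ)
    (hsupp : ∀ j1 j2 k1 k2 : ZMod d, j2 - p j1 ≠ k2 - p k1 → ρ (j1, j2) (k1, k2) = 0) :
    (Matrix.of fun jk uv : ZMod d × ZMod d => ρ (jk.1, uv.2) (uv.1, jk.2)).PosSemidef ↔
      ∀ y : ZMod d,
        (Matrix.of fun j k : ZMod d => ρ (j, y - p k) (k, y - p j)).PosSemidef := by
  rw [← Matrix.partialTranspose, Matrix.partialTranspose_eq_submatrix_blockDiagonal p ρ hsupp,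
    Matrix.posSemidef_submatrix_equiv, Matrix.posSemidef_blockDiagonal_iff]

/-- Let `p` be a permutation of `Z_d` with `p(0) = 0` and `ρ` a
bipartite density (positive semidefinite, trace one) supported in `M_p`.  Then
`ρ` is PPT (its partial transposition `(ρ^τ)_{j1 j2, k1 k2} = ρ_{j1 k2, k1 j2}`
is positive semidefinite) iff for every `y ∈ Z_d` the `d×d` matrix `B^y` with
entries `B^y_{j,k} = ρ_{j (y−p(k)), k (y−p(j))}` is positive semidefinite. -/
theorem ppt_iff_blocks (d : ℕ) [NeZero d] (hd : 2 ≤ d)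
    (p : Equiv.Perm (ZMod d)) (hp0 : p 0 = 0)
    (ρ : Matrix (ZMod d × ZMod d) (ZMod d × ZMod d) ℂ)
    (hρ : ρ.PosSemidef ∧ ρ.trace = 1)
    (hsupp : ∀ j1 j2 k1 k2 : ZMod d, j2 - p j1 ≠ k2 - p k1 → ρ (j1, j2) (k1, k2) = 0) :
    (Matrix.of fun jk uv : ZMod d × ZMod d => ρ (jk.1, uv.2) (uv.1, jk.2)).PosSemidef ↔
      ∀ y : ZMod d,
        (Matrix.of fun j k : ZMod d => ρ (j, y - p k) (k, y - p j)).PosSemidef :=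
  ppt_iff_blocks_general d p ρ hsupp
end

section
/- Let d be an odd prime and ρ a bipartite density supported in M such that for every k ≠ 0 and all n1, n2 ∈ Z_d, ρ_{n1 n2, (n1+k)(n2+k)} = c_{n2−n1}, where c_r (r ∈ Z_d) are real constants. Then for all a = (a1,a2), m = (m1,m2) ∈ Z_d × Z_d, C(a,m) = (1/d) δ(a1, −a2) Σ_{r∈Z_d} c_r (d·δ(m1+m2, r a1) − 1), where δ is the Kronecker delta on Z_d. -/
open Matrix
open scoped ComplexOrder

/-- `η = exp(2πi/d)`. -/
noncomputable def eta (d : ℕ) : ℂ := Complex.exp (2 * Real.pi * Complex.I / d)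

/-- The coefficient `C(a,m)` determined by
`d² C(a,m) = Σ_{k=1}^{d−1} Σ_{n1,n2} η^{−(k(k−1)/2)(a1+a2) − k(m1+m2) − k(a1 n1 + a2 n2)}
ρ_{n1 n2, (n1+k)(n2+k)}`. -/
noncomputable def Ccoef (d : ℕ) [NeZero d]
    (ρ : Matrix (ZMod d × ZMod d) (ZMod d × ZMod d) ℂ)
    (a m : ZMod d × ZMod d) : ℂ :=
  ((d : ℂ) ^ 2)⁻¹ *
    ∑ k ∈ Finset.Icc 1 (d - 1), ∑ n1 : ZMod d, ∑ n2 : ZMod d,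
      eta d ^ (-(((k : ℤ) * ((k : ℤ) - 1) / 2) * ((a.1.val : ℤ) + (a.2.val : ℤ))
          + (k : ℤ) * ((m.1.val : ℤ) + (m.2.val : ℤ))
          + (k : ℤ) * ((a.1.val : ℤ) * (n1.val : ℤ) + (a.2.val : ℤ) * (n2.val : ℤ))))
        * ρ (n1, n2) (n1 + (k : ZMod d), n2 + (k : ZMod d))

/-!
Writing `n2 = n1 + r`, the `n1`-sum of the phase is `d` or `0` according as `k (a1 + a2) = 0`;
since `k` is a unit modulo the prime `d`, this forces `a2 = -a1`, which also kills the quadratic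
phase `k (k - 1) / 2 · (a1 + a2)`, however the halving is read modulo `d`. What remains is
`Σ_r c_r Σ_{k=1}^{d-1} η^{k (a1 r - m1 - m2)}`, and a character summed over the nonzero residues
gives `d δ - 1`.
-/

open Finset ZMod

lemma natCast_ne_zero_of_mem_Icc {d k : ℕ} (hk : k ∈ Icc 1 (d - 1)) : (k : ZMod d) ≠ 0 := by
  rw [mem_Icc] at hk
  rw [Ne, natCast_eq_zero_iff]
  exact fun hdvd => by have := Nat.le_of_dvd (by omega) hdvd; omega

section
variable {d : ℕ} [NeZero d]

lemma eta_zpow (z : ℤ) : eta d ^ z = stdAddChar (z : ZMod d) := by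
  rw [stdAddChar_coe, eta, ← Complex.exp_int_mul]
  ring_nf

lemma sum_Icc_natCast {M : Type*} [AddCommGroup M] (f : ZMod d → M) :
    ∑ k ∈ Icc 1 (d - 1), f k = ∑ x, f x - f 0 := by
  rw [← sum_erase_eq_sub (mem_univ 0)]
  refine sum_nbij' (fun k => (k : ZMod d)) ZMod.val (fun k hk => ?_) (fun x hx => ?_)
    (fun k hk => ?_) (fun x _ => by simp) (fun _ _ => rfl)
  · simpa using natCast_ne_zero_of_mem_Icc hk
  · have := (val_ne_zero x).mpr (ne_of_mem_erase hx)
    have := val_lt x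
    simp only [mem_Icc]; omega
  · rw [mem_Icc] at hk
    exact val_cast_of_lt (by omega)

lemma sum_stdAddChar_mul (t : ZMod d) :
    ∑ x, stdAddChar (t * x) = if t = 0 then (d : ℂ) else 0 := by
  simp_rw [mul_comm t, AddChar.sum_mulShift t (isPrimitive_stdAddChar d), ZMod.card, Nat.cast_ite,
    Nat.cast_zero]

lemma sum_Icc_stdAddChar_mul (u : ZMod d) :
    ∑ k ∈ Icc 1 (d - 1), stdAddChar ((k : ZMod d) * u) = (if u = 0 then (d : ℂ) else 0) - 1 := by
  rw [sum_Icc_natCast (fun k => stdAddChar (k * u)), zero_mul, AddChar.map_zero_eq_one]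
  simp_rw [mul_comm _ u, sum_stdAddChar_mul]

end

section
variable {p : ℕ} [Fact p.Prime]

lemma sum_sum_stdAddChar_mul_diff (T s a1 a2 k : ZMod p) (hk : k ≠ 0) (c : ZMod p → ℂ) :
    ∑ n1, ∑ n2, stdAddChar (-(T * (a1 + a2) + k * s + k * (a1 * n1 + a2 * n2))) * c (n2 - n1)
      = if a1 + a2 = 0 then p * ∑ r, c r * stdAddChar (k * (a1 * r - s)) else 0 := by
  calc _ = ∑ n1, ∑ r, c r * stdAddChar (-(T * (a1 + a2) + k * s + k * a2 * r))
          * stdAddChar (-(k * (a1 + a2)) * n1) := by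
        refine sum_congr rfl fun n1 _ =>
          (Fintype.sum_equiv (Equiv.addLeft n1) _ _ fun r => ?_).symm
        rw [Equiv.coe_addLeft, add_sub_cancel_left, mul_assoc, ← AddChar.map_add_eq_mul, mul_comm]
        ring_nf
    _ = ∑ r, ∑ n1, c r * stdAddChar (-(T * (a1 + a2) + k * s + k * a2 * r))
          * stdAddChar (-(k * (a1 + a2)) * n1) := sum_comm
    _ = ∑ r, c r * stdAddChar (-(T * (a1 + a2) + k * s + k * a2 * r))
          * if -(k * (a1 + a2)) = 0 then (p : ℂ) else 0 := by
        simp_rw [← mul_sum, sum_stdAddChar_mul]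
    _ = _ := by
        have hcancel : -(k * (a1 + a2)) = 0 ↔ a1 + a2 = 0 := by simp [hk]
        by_cases h : a1 + a2 = 0
        · rw [if_pos (hcancel.mpr h), if_pos h, mul_sum]
          obtain rfl : a2 = -a1 := eq_neg_of_add_eq_zero_right h
          refine sum_congr rfl fun r _ => ?_
          ring_nf
        · simp [hcancel, h]

end

lemma sum_sum_eta_zpow_mul_of_translation_invariant {d : ℕ} [Fact d.Prime]
    (ρ : Matrix (ZMod d × ZMod d) (ZMod d × ZMod d) ℂ) (c : ZMod d → ℝ)
    (hval : ∀ k : ZMod d, k ≠ 0 → ∀ n1 n2 : ZMod d,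
        ρ (n1, n2) (n1 + k, n2 + k) = (c (n2 - n1) : ℂ))
    (a1 a2 m1 m2 : ZMod d) {k : ℕ} (hk : (k : ZMod d) ≠ 0) :
    ∑ n1 : ZMod d, ∑ n2 : ZMod d,
      eta d ^ (-(((k : ℤ) * ((k : ℤ) - 1) / 2) * ((a1.val : ℤ) + (a2.val : ℤ))
          + (k : ℤ) * ((m1.val : ℤ) + (m2.val : ℤ))
          + (k : ℤ) * ((a1.val : ℤ) * (n1.val : ℤ) + (a2.val : ℤ) * (n2.val : ℤ))))
        * ρ (n1, n2) (n1 + (k : ZMod d), n2 + (k : ZMod d))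
      = if a1 + a2 = 0 then
          d * ∑ r, (c r : ℂ) * stdAddChar ((k : ZMod d) * (a1 * r - (m1 + m2)))
        else 0 := by
  rw [← sum_sum_stdAddChar_mul_diff (((k : ℤ) * ((k : ℤ) - 1) / 2 : ℤ) : ZMod d) _ _ _ _ hk]
  refine sum_congr rfl fun n1 _ => sum_congr rfl fun n2 _ => ?_
  rw [eta_zpow, hval _ hk]
  push_cast [natCast_val, cast_id]
  rfl

theorem Ccoef_of_translation_invariant_general (d : ℕ) [NeZero d] (hd : d.Prime)
    (ρ : Matrix (ZMod d × ZMod d) (ZMod d × ZMod d) ℂ)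
    (c : ZMod d → ℝ)
    (hval : ∀ k : ZMod d, k ≠ 0 → ∀ n1 n2 : ZMod d,
        ρ (n1, n2) (n1 + k, n2 + k) = (c (n2 - n1) : ℂ)) :
    ∀ a1 a2 m1 m2 : ZMod d,
      Ccoef d ρ (a1, a2) (m1, m2)
        = (d : ℂ)⁻¹ * (if a1 = -a2 then 1 else 0)
            * ∑ r : ZMod d,
                (c r : ℂ) * ((d : ℂ) * (if m1 + m2 = r * a1 then 1 else 0) - 1) := by
  have := Fact.mk hd
  intro a1 a2 m1 m2
  rw [Ccoef, sum_congr rfl fun k hk => sum_sum_eta_zpow_mul_of_translation_invariant ρ c hval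
    a1 a2 m1 m2 (natCast_ne_zero_of_mem_Icc hk)]
  by_cases h : a1 + a2 = 0
  · rw [if_pos (eq_neg_of_add_eq_zero_left h)]
    simp only [if_pos h, ← mul_sum]
    rw [sum_comm]
    have hδ (r : ZMod d) : (if a1 * r - (m1 + m2) = 0 then (d : ℂ) else 0)
        = d * if m1 + m2 = r * a1 then 1 else 0 := by
      rw [mul_ite, mul_one, mul_zero]
      exact if_congr (by rw [sub_eq_zero, mul_comm, eq_comm]) rfl rfl
    simp_rw [← mul_sum, sum_Icc_stdAddChar_mul, hδ]
    rw [pow_two, mul_inv, mul_assoc, inv_mul_cancel_left₀ (Nat.cast_ne_zero.mpr hd.ne_zero),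
      mul_one]
  · rw [if_neg fun h' => h (by rw [h', neg_add_cancel])]
    simp [h]

/-- For `d` an odd prime and `ρ` a bipartite density supported
in `M` whose off-diagonal data `ρ_{n1 n2,(n1+k)(n2+k)} = c_{n2−n1}` (`k ≠ 0`)
depend only on `r = n2 − n1` through real constants `c_r`, one has
`C(a,m) = (1/d) δ(a1,−a2) Σ_r c_r (d δ(m1+m2, r a1) − 1)`. -/
theorem Ccoef_of_translation_invariant (d : ℕ) [NeZero d] (hd : d.Prime) (hodd : Odd d)
    (ρ : Matrix (ZMod d × ZMod d) (ZMod d × ZMod d) ℂ)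
    (hρ : ρ.PosSemidef ∧ ρ.trace = 1)
    (hsupp : ∀ j1 j2 k1 k2 : ZMod d, j2 - j1 ≠ k2 - k1 → ρ (j1, j2) (k1, k2) = 0)
    (c : ZMod d → ℝ)
    (hval : ∀ k : ZMod d, k ≠ 0 → ∀ n1 n2 : ZMod d,
        ρ (n1, n2) (n1 + k, n2 + k) = (c (n2 - n1) : ℂ)) :
    ∀ a1 a2 m1 m2 : ZMod d,
      Ccoef d ρ (a1, a2) (m1, m2)
        = (d : ℂ)⁻¹ * (if a1 = -a2 then 1 else 0)
            * ∑ r : ZMod d,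
                (c r : ℂ) * ((d : ℂ) * (if m1 + m2 = r * a1 then 1 else 0) - 1) :=
  Ccoef_of_translation_invariant_general d hd ρ c hval
end

section
/- Let d be an odd prime, c > 0 a real number, and ρ a bipartite density supported in M such that for every k ≠ 0 and all n1, n2 ∈ Z_d, ρ_{n1 n2, (n1+k)(n2+k)} = c·δ(n1,n2). Then ρ = ρ_D − c I_d ⊗ I_d + c Σ_{a∈Z_d} Σ_{m∈Z_d} P_{a,1}(m) ⊗ P_{−a,1}(−m), and if every diagonal entry of ρ is at least c then ρ is separable. -/
open Matrix Kronecker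
open scoped ComplexOrder

/-- The generalized spin matrix `S_{j,k} = Σ_m η^{jm} |m⟩⟨m+k|`. -/
noncomputable def spinS (d : ℕ) (j k : ZMod d) : Matrix (ZMod d) (ZMod d) ℂ :=
  Matrix.of fun m n => if n = m + k then eta d ^ (j.val * m.val) else 0

/-- `P_{j,k}(r) = (1/d) Σ_{m=0}^{d−1} η^{mr} (S_{j,k})^m`. -/
noncomputable def spinP (d : ℕ) [NeZero d] (j k r : ZMod d) : Matrix (ZMod d) (ZMod d) ℂ :=
  (d : ℂ)⁻¹ • ∑ m : Fin d, eta d ^ (m.val * r.val) • spinS d j k ^ (m : ℕ)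

/-- A bipartite density on `C^d ⊗ C^d` is separable if it is a finite convex
combination of Kronecker products of `d×d` densities. -/
def IsSeparableState {d : ℕ} [NeZero d]
    (ρ : Matrix (ZMod d × ZMod d) (ZMod d × ZMod d) ℂ) : Prop :=
  ∃ (n : ℕ) (w : Fin n → ℝ) (σ τ : Fin n → Matrix (ZMod d) (ZMod d) ℂ),
    (∀ i, 0 ≤ w i) ∧ (∑ i, w i = 1) ∧
    (∀ i, (σ i).PosSemidef ∧ (σ i).trace = 1) ∧
    (∀ i, (τ i).PosSemidef ∧ (τ i).trace = 1) ∧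
    ρ = ∑ i, (w i : ℂ) • (σ i ⊗ₖ τ i)


/-!
Write `ψ = ZMod.stdAddChar` and `φ(t, p) = Σ_{i < t} (p + i)`. Then `S_{a,1}^t` has the entry
`ψ(a φ(t, p))` at `(p, p + t)`, so `P_{a,1}(m)_{pq} = d⁻¹ ψ((q - p) m + a φ(q - p, p))`.
For odd `d` we have `d ∣ φ(d, p)`, so `φ` descends to `t ∈ Z_d` with the cocycle identity
`φ(s + t, p) = φ(s, p) + φ(t, p + s)`; this makes `P_{a,1}(m)` a projection of trace one.
Orthogonality of the characters of `Z_d²` shows that `Σ_{a,m} P_{a,1}(m) ⊗ P_{-a,1}(-m)` is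
the 0/1 matrix supported on the entries `((p₁, p₂), (p₁ + k, p₂ + k))` with
`k (p₁ - p₂) = 0`; for prime `d` these are the diagonal entries and those with `p₁ = p₂`, which
gives the first claim. Writing `ρ_D - c I = Σ_i (ρ_ii - c) |i⟩⟨i|` then exhibits `ρ` as a convex
combination of product states with weights `ρ_ii - c ≥ 0` and `c`, summing to `tr ρ = 1`.
-/

open ZMod (stdAddChar)

section Character
variable {d : ℕ} [NeZero d]

lemma eta_pow_eq_stdAddChar (n : ℕ) : eta d ^ n = stdAddChar (n : ZMod d) := by
  rw [ZMod.stdAddChar_apply, ZMod.toCircle_natCast, eta, ← Complex.exp_nat_mul]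
  ring_nf

lemma eta_pow_val_mul_val (x y : ZMod d) : eta d ^ (x.val * y.val) = stdAddChar (x * y) := by
  rw [eta_pow_eq_stdAddChar]
  push_cast [ZMod.natCast_zmod_val]
  rfl

lemma sum_sum_stdAddChar (x y : ZMod d) :
    ∑ a : ZMod d, ∑ m : ZMod d, stdAddChar (a * x + m * y) =
      if x = 0 ∧ y = 0 then (d : ℂ) ^ 2 else 0 := by
  have hψ := ZMod.isPrimitive_stdAddChar d
  simp_rw [AddChar.map_add_eq_mul, ← Finset.mul_sum, ← Finset.sum_mul,
    AddChar.sum_mulShift _ hψ, ZMod.card]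
  split_ifs <;> simp_all [sq]

end Character

section Phase
variable {d : ℕ}

def spinPhase (n : ℕ) (p : ZMod d) : ZMod d := ∑ i ∈ Finset.range n, (p + i)

lemma spinPhase_zero (p : ZMod d) : spinPhase 0 p = 0 := rfl

lemma spinPhase_add (a b : ℕ) (p : ZMod d) :
    spinPhase (a + b) p = spinPhase a p + spinPhase b (p + (a : ZMod d)) := by
  simp only [spinPhase, Finset.sum_range_add, Nat.cast_add, add_assoc]

lemma spinPhase_succ (n : ℕ) (p : ZMod d) : spinPhase (n + 1) p = spinPhase n p + (p + n) :=
  Finset.sum_range_succ _ _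

lemma spinPhase_sub (n : ℕ) (p₁ p₂ : ZMod d) :
    spinPhase n p₁ - spinPhase n p₂ = n * (p₁ - p₂) := by
  simp [spinPhase, ← Finset.sum_sub_distrib]

lemma spinPhase_self (hodd : Odd d) (p : ZMod d) : spinPhase d p = 0 := by
  obtain ⟨k, hk⟩ := hodd
  have hgauss : ∑ i ∈ Finset.range d, i = d * k := by
    rw [Finset.sum_range_id, hk, Nat.add_sub_cancel, Nat.mul_div_assoc _ (dvd_mul_right 2 k),
      Nat.mul_div_cancel_left _ two_pos]
  rw [spinPhase, Finset.sum_add_distrib, ← Nat.cast_sum, hgauss]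
  simp

lemma spinPhase_mul_self (hodd : Odd d) (k : ℕ) (p : ZMod d) : spinPhase (d * k) p = 0 := by
  induction k generalizing p with
  | zero => rfl
  | succ k ih => rw [Nat.mul_succ, spinPhase_add, ih, spinPhase_self hodd, add_zero]

lemma spinPhase_mod (hodd : Odd d) (n : ℕ) (p : ZMod d) : spinPhase (n % d) p = spinPhase n p := by
  conv_rhs => rw [← Nat.mod_add_div n d, spinPhase_add, spinPhase_mul_self hodd, add_zero]

lemma spinPhase_val_add [NeZero d] (hodd : Odd d) (x y p : ZMod d) :
    spinPhase (x + y).val p = spinPhase x.val p + spinPhase y.val (p + x) := by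
  rw [ZMod.val_add, spinPhase_mod hodd, spinPhase_add, ZMod.natCast_zmod_val]

end Phase

section Spin
variable {d : ℕ} [NeZero d]

lemma spinS_pow (a : ZMod d) (t : ℕ) :
    spinS d a 1 ^ t =
      of fun p q : ZMod d => if q = p + t then stdAddChar (a * spinPhase t p) else 0 := by
  induction t with
  | zero => ext p q; simp [one_apply, spinPhase_zero, eq_comm]
  | succ t ih =>
    ext p q
    rw [pow_succ, ih, mul_apply, Finset.sum_eq_single (p + t) (fun r _ hr => by simp [hr])
      (by simp)]
    simp only [of_apply, spinS, Nat.cast_succ, ← add_assoc, if_true]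
    split_ifs
    · rw [eta_pow_val_mul_val, ← AddChar.map_add_eq_mul, spinPhase_succ, mul_add]
      ring_nf
    · simp

lemma spinP_apply (a m p q : ZMod d) :
    spinP d a 1 m p q = (d : ℂ)⁻¹ * stdAddChar ((q - p) * m + a * spinPhase (q - p).val p) := by
  rw [spinP, Matrix.smul_apply, Matrix.sum_apply,
    Finset.sum_eq_single ⟨(q - p).val, ZMod.val_lt _⟩]
  · simp [spinS_pow, eta_pow_val_mul_val, ← AddChar.map_add_eq_mul, mul_comm]
  · intro b _ hb
    have : q ≠ p + (b : ℕ) := fun h => hb (Fin.ext (by simp [h, ZMod.val_natCast_of_lt b.isLt]))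
    simp [spinS_pow, this]
  · simp

end Spin

section Projector
variable {d : ℕ} [NeZero d]

lemma spinP_trace (a m : ZMod d) : (spinP d a 1 m).trace = 1 := by
  have hd_ne : (d : ℂ) ≠ 0 := NeZero.ne _
  simp [trace, spinP_apply, spinPhase_zero, ZMod.card, hd_ne]

lemma conjTranspose_spinP_mul_self (hodd : Odd d) (a m : ZMod d) :
    (spinP d a 1 m)ᴴ * spinP d a 1 m = spinP d a 1 m := by
  have hd_ne : (d : ℂ) ≠ 0 := NeZero.ne _
  ext p q
  have hterm : ∀ r, (spinP d a 1 m)ᴴ p r * spinP d a 1 m r q = (d : ℂ)⁻¹ * spinP d a 1 m p q := by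
    intro r
    -- the cocycle identity makes the term independent of `r`
    have hcocycle := spinPhase_val_add hodd (p - r) (q - p) r
    rw [sub_add_sub_cancel', add_sub_cancel] at hcocycle
    simp only [conjTranspose_apply, spinP_apply, star_mul', star_inv₀, Complex.star_def,
      Complex.conj_natCast, ← AddChar.map_neg_eq_conj]
    rw [mul_mul_mul_comm, ← AddChar.map_add_eq_mul, hcocycle]
    ring_nf
  rw [mul_apply, Finset.sum_congr rfl fun r _ => hterm r]
  simp [ZMod.card, hd_ne]

lemma spinP_posSemidef (hodd : Odd d) (a m : ZMod d) : (spinP d a 1 m).PosSemidef :=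
  conjTranspose_spinP_mul_self hodd a m ▸ posSemidef_conjTranspose_mul_self _

lemma sum_spinP_kronecker_apply (p₁ p₂ q₁ q₂ : ZMod d) :
    (∑ a : ZMod d, ∑ m : ZMod d, spinP d a 1 m ⊗ₖ spinP d (-a) 1 (-m)) (p₁, p₂) (q₁, q₂) =
      if q₁ - p₁ = q₂ - p₂ ∧ (q₁ - p₁) * (p₁ - p₂) = 0 then 1 else 0 := by
  have hd_ne : (d : ℂ) ≠ 0 := NeZero.ne _
  have hterm : ∀ a m : ZMod d, (spinP d a 1 m ⊗ₖ spinP d (-a) 1 (-m)) (p₁, p₂) (q₁, q₂) =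
      (d : ℂ)⁻¹ ^ 2 * stdAddChar (a * (spinPhase (q₁ - p₁).val p₁ - spinPhase (q₂ - p₂).val p₂)
        + m * ((q₁ - p₁) - (q₂ - p₂))) := by
    intro a m
    rw [kroneckerMap_apply, spinP_apply, spinP_apply, mul_mul_mul_comm,
      ← AddChar.map_add_eq_mul, sq]
    congr 2
    ring
  simp only [Matrix.sum_apply, hterm, ← Finset.mul_sum, sum_sum_stdAddChar]
  have hcond : spinPhase (q₁ - p₁).val p₁ - spinPhase (q₂ - p₂).val p₂ = 0 ∧
      (q₁ - p₁) - (q₂ - p₂) = 0 ↔ q₁ - p₁ = q₂ - p₂ ∧ (q₁ - p₁) * (p₁ - p₂) = 0 := by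
    rw [sub_eq_zero (b := q₂ - p₂), and_comm]
    refine and_congr_right fun ht => ?_
    rw [← ht, spinPhase_sub, ZMod.natCast_zmod_val]
  rw [if_congr hcond rfl rfl]
  split_ifs <;> simp [hd_ne]

end Projector

section Density
variable {d : ℕ} [NeZero d]

theorem eq_diagonal_sub_add_sum_spinP_kronecker (hd : d.Prime) (c : ℂ)
    (ρ : Matrix (ZMod d × ZMod d) (ZMod d × ZMod d) ℂ)
    (hsupp : ∀ j₁ j₂ k₁ k₂ : ZMod d, j₂ - j₁ ≠ k₂ - k₁ → ρ (j₁, j₂) (k₁, k₂) = 0)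
    (hval : ∀ k : ZMod d, k ≠ 0 → ∀ n₁ n₂ : ZMod d,
        ρ (n₁, n₂) (n₁ + k, n₂ + k) = c * (if n₁ = n₂ then 1 else 0)) :
    ρ = diagonal ρ.diag - c • ((1 : Matrix (ZMod d) (ZMod d) ℂ) ⊗ₖ 1)
      + c • ∑ a : ZMod d, ∑ m : ZMod d, spinP d a 1 m ⊗ₖ spinP d (-a) 1 (-m) := by
  have := Fact.mk hd
  ext ⟨p₁, p₂⟩ ⟨q₁, q₂⟩
  obtain ⟨k₁, rfl⟩ : ∃ k, q₁ = p₁ + k := ⟨q₁ - p₁, by ring⟩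
  obtain ⟨k₂, rfl⟩ : ∃ k, q₂ = p₂ + k := ⟨q₂ - p₂, by ring⟩
  simp only [Matrix.add_apply, Matrix.sub_apply, Matrix.smul_apply, sum_spinP_kronecker_apply,
    add_sub_cancel_left, one_kronecker_one, diagonal_apply, one_apply, smul_eq_mul]
  by_cases hk : k₁ = k₂
  · subst hk
    by_cases h0 : k₁ = 0
    · subst h0
      simp
    · rw [hval k₁ h0]
      simp [h0, sub_eq_zero]
  · rw [hsupp _ _ _ _ fun h => hk (by linear_combination h)]
    grind

end Density

lemma single_posSemidef {n : Type*} [Fintype n] [DecidableEq n] (p : n) :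
    (single p p (1 : ℂ)).PosSemidef := by
  rw [← diagonal_single]
  exact posSemidef_diagonal_iff.mpr (Pi.single_nonneg.mpr zero_le_one)

section Separable
variable {d : ℕ} [NeZero d]

lemma IsSeparableState.of_fintype_sum {ι : Type*} [Fintype ι] (w : ι → ℝ)
    (σ τ : ι → Matrix (ZMod d) (ZMod d) ℂ) (hw : ∀ i, 0 ≤ w i) (hw₁ : ∑ i, w i = 1)
    (hσ : ∀ i, (σ i).PosSemidef ∧ (σ i).trace = 1)
    (hτ : ∀ i, (τ i).PosSemidef ∧ (τ i).trace = 1) :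
    IsSeparableState (∑ i, (w i : ℂ) • (σ i ⊗ₖ τ i)) := by
  let e := (Fintype.equivFin ι).symm
  exact ⟨Fintype.card ι, w ∘ e, σ ∘ e, τ ∘ e, fun _ => hw _, (e.sum_comp w).trans hw₁,
    fun _ => hσ _, fun _ => hτ _, (e.sum_comp _).symm⟩

theorem isSeparableState_of_eq_diagonal_sub_add (hodd : Odd d) {c : ℝ} (hc : 0 ≤ c)
    {ρ : Matrix (ZMod d × ZMod d) (ZMod d × ZMod d) ℂ} (hρ : ρ.PosSemidef ∧ ρ.trace = 1)
    (hdiag : ∀ i, c ≤ (ρ i i).re)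
    (hρ_eq : ρ = diagonal ρ.diag - (c : ℂ) • ((1 : Matrix (ZMod d) (ZMod d) ℂ) ⊗ₖ 1)
      + (c : ℂ) • ∑ a : ZMod d, ∑ m : ZMod d, spinP d a 1 m ⊗ₖ spinP d (-a) 1 (-m)) :
    IsSeparableState ρ := by
  have hre : ∀ i, ((ρ i i).re : ℂ) = ρ i i := hρ.1.1.coe_re_apply_self
  have hdiagonal : diagonal ρ.diag - (c : ℂ) • ((1 : Matrix (ZMod d) (ZMod d) ℂ) ⊗ₖ 1) =
      ∑ i : ZMod d × ZMod d,
        (((ρ i i).re - c : ℝ) : ℂ) • (single i.1 i.1 1 ⊗ₖ single i.2 i.2 1) := by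
    simp_rw [single_kronecker_single, smul_single, one_mul, sum_single_eq_diagonal,
      one_kronecker_one]
    ext i j
    by_cases h : i = j <;> simp [one_apply, h, hre]
  have hspin : (c : ℂ) • ∑ a : ZMod d, ∑ m : ZMod d, spinP d a 1 m ⊗ₖ spinP d (-a) 1 (-m) =
      ∑ am : ZMod d × ZMod d, (c : ℂ) • (spinP d am.1 1 am.2 ⊗ₖ spinP d (-am.1) 1 (-am.2)) := by
    rw [← Fintype.sum_prod_type', Finset.smul_sum]
  have htrace : ∑ i, (ρ i i).re = 1 := by
    simpa [trace, Complex.re_sum] using congrArg Complex.re hρ.2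
  convert IsSeparableState.of_fintype_sum
    (Sum.elim (fun i => (ρ i i).re - c) fun _ : ZMod d × ZMod d => c)
    (Sum.elim (fun i => single i.1 i.1 1) fun am : ZMod d × ZMod d => spinP d am.1 1 am.2)
    (Sum.elim (fun i => single i.2 i.2 1) fun am : ZMod d × ZMod d => spinP d (-am.1) 1 (-am.2))
    ?_ ?_ ?_ ?_ using 1
  · simp only [Fintype.sum_sum_type, Sum.elim_inl, Sum.elim_inr]
    rw [← hdiagonal, ← hspin]
    exact hρ_eq
  · rintro (i | am)
    · exact sub_nonneg.mpr (hdiag i)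
    · exact hc
  · simp [Fintype.sum_sum_type, Finset.sum_sub_distrib, htrace]
  · rintro (i | am)
    · exact ⟨single_posSemidef _, trace_single_eq_same _ _⟩
    · exact ⟨spinP_posSemidef hodd _ _, spinP_trace _ _⟩
  · rintro (i | am)
    · exact ⟨single_posSemidef _, trace_single_eq_same _ _⟩
    · exact ⟨spinP_posSemidef hodd _ _, spinP_trace _ _⟩

end Separable

/-- For `d` an odd prime, `c > 0`, and `ρ` a bipartite density
supported in `M` with `ρ_{n1 n2,(n1+k)(n2+k)} = c δ(n1,n2)` for `k ≠ 0`, one has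
`ρ = ρ_D − c I_d ⊗ I_d + c Σ_{a,m} P_{a,1}(m) ⊗ P_{−a,1}(−m)`, and if every
diagonal entry of `ρ` is at least `c` then `ρ` is separable. -/
theorem special_case_positive_c (d : ℕ) [NeZero d] (hd : d.Prime) (hodd : Odd d)
    (c : ℝ) (hc : 0 < c)
    (ρ : Matrix (ZMod d × ZMod d) (ZMod d × ZMod d) ℂ)
    (hρ : ρ.PosSemidef ∧ ρ.trace = 1)
    (hsupp : ∀ j1 j2 k1 k2 : ZMod d, j2 - j1 ≠ k2 - k1 → ρ (j1, j2) (k1, k2) = 0)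
    (hval : ∀ k : ZMod d, k ≠ 0 → ∀ n1 n2 : ZMod d,
        ρ (n1, n2) (n1 + k, n2 + k) = (c : ℂ) * (if n1 = n2 then 1 else 0)) :
    (ρ = Matrix.diagonal ρ.diag
        - (c : ℂ) • ((1 : Matrix (ZMod d) (ZMod d) ℂ) ⊗ₖ (1 : Matrix (ZMod d) (ZMod d) ℂ))
        + (c : ℂ) • ∑ a : ZMod d, ∑ m : ZMod d, spinP d a 1 m ⊗ₖ spinP d (-a) 1 (-m)) ∧
    ((∀ i : ZMod d × ZMod d, c ≤ (ρ i i).re) → IsSeparableState ρ) := by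
  have hρ_eq := eq_diagonal_sub_add_sum_spinP_kronecker hd (c : ℂ) ρ hsupp hval
  exact ⟨hρ_eq, fun hdiag => isSeparableState_of_eq_diagonal_sub_add hodd hc.le hρ hdiag hρ_eq⟩
end

section
/- Let d be an odd prime, c < 0 a real number, and ρ a bipartite density supported in M such that for every k ≠ 0 and all n1, n2 ∈ Z_d, ρ_{n1 n2, (n1+k)(n2+k)} = c·δ(n1,n2). If every diagonal entry of ρ is at least |c|(d−1), then ρ is separable. -/
open Matrix Kronecker
open scoped ComplexOrder

/-!
Write `Ω = ∑ᵢ |ii⟩` (`maxEntangled`). The hypotheses say `ρ = D + c (|Ω⟩⟨Ω| - diag Ω)` with `D`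
diagonal. For `i ≠ j`, averaging the product states `|i + b j⟩⟨i + b j| ⊗ |i - b̄ j⟩⟨i - b̄ j|`
over the fourth roots of unity `b` kills every term carrying a phase and leaves
`pairTerm i j = |ii - jj⟩⟨ii - jj| + |ji⟩⟨ji| + |ij⟩⟨ij|`, and
`∑_{i ≠ j} pairTerm i j = 2 ((d - 1) diag Ω + 1 - |Ω⟩⟨Ω|)`. Hence
`ρ - (|c| / 2) ∑_{i ≠ j} pairTerm i j` is diagonal, with entries `ρ_pp - |c| (d - 1)` on
`p = (i, i)` and `ρ_pp - |c|` elsewhere; both are nonnegative because `d ≥ 2`. So `ρ` lies in the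
convex cone spanned by product states, and a trace-one element of that cone is separable.
-/

open Finset Complex ComplexConjugate

section KetBra

variable {ι κ : Type*}

def ketBra (w : ι → ℂ) : Matrix ι ι ℂ := vecMulVec w (star w)

lemma ketBra_apply (w : ι → ℂ) (i j : ι) : ketBra w i j = w i * conj (w j) := rfl

lemma ketBra_posSemidef [Fintype ι] (w : ι → ℂ) : (ketBra w).PosSemidef :=
  posSemidef_vecMulVec_self_star w

@[simp]
lemma ketBra_zero : ketBra (0 : ι → ℂ) = 0 := by
  ext i j; simp [ketBra_apply]

@[simp]
lemma ketBra_neg (w : ι → ℂ) : ketBra (-w) = ketBra w := by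
  ext i j; simp [ketBra_apply]

lemma ketBra_kronecker_ketBra (u v : ι → ℂ) :
    ketBra u ⊗ₖ ketBra v = ketBra (fun p : ι × ι => u p.1 * v p.2) := by
  ext p q
  simp only [kroneckerMap_apply, ketBra_apply, map_mul]
  ring

lemma single_mul_single_apply [DecidableEq ι] (i j : ι) (p : ι × ι) :
    (Pi.single i 1 : ι → ℂ) p.1 * (Pi.single j 1 : ι → ℂ) p.2 =
      (Pi.single (i, j) 1 : ι × ι → ℂ) p := by
  obtain ⟨p₁, p₂⟩ := p
  simp only [Pi.single_apply, Prod.mk.injEq, ite_and, mul_ite, mul_one, mul_zero]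
  split_ifs <;> simp_all

lemma ketBra_single [DecidableEq ι] (x : ι) :
    ketBra (Pi.single x 1) = diagonal (Pi.single x 1) := by
  ext p q
  simp only [ketBra_apply, diagonal_apply, Pi.single_apply]
  split_ifs <;> simp_all

lemma sum_ketBra_single [Fintype ι] [DecidableEq ι] : ∑ x : ι, ketBra (Pi.single x 1) = 1 := by
  simp only [ketBra_single, ← diagonalAddMonoidHom_apply, ← map_sum, Finset.univ_sum_single]
  exact diagonal_one

/-- The cross terms carry one of the phases `b`, `b²`, `b̄`, `b̄²`, each of which averages to zero
over the fourth roots of unity. -/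
lemma sum_ketBra_fourthRoots (w₀ w₁ w₂ : ι → ℂ) :
    ∑ k : Fin 4, ketBra (w₀ + I ^ (k : ℕ) • w₁ + conj (I ^ (k : ℕ)) • w₂) =
      (4 : ℂ) • (ketBra w₀ + ketBra w₁ + ketBra w₂) := by
  ext p q
  simp only [Fin.sum_univ_four, Fin.isValue, Fin.coe_ofNat_eq_mod, Nat.zero_mod, Nat.one_mod,
    Nat.reduceMod, Nat.mod_succ, pow_zero, pow_succ, one_mul, map_pow, conj_I, I_mul_I, mul_neg,
    neg_mul, neg_neg, one_smul, neg_smul, Matrix.add_apply, Matrix.smul_apply, ketBra_apply,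
    Pi.add_apply, Pi.smul_apply, Pi.neg_apply, smul_eq_mul, map_add, map_mul, map_neg]
  ring_nf
  simp only [I_sq]
  ring

lemma sum_sum_sub_mul_sub {R : Type*} [CommRing R] [Fintype κ] (x y : κ → R) :
    ∑ i, ∑ j, (x i - x j) * (y i - y j) =
      2 * (Fintype.card κ * ∑ i, x i * y i - (∑ i, x i) * ∑ i, y i) := by
  have h : ∀ i j, (x i - x j) * (y i - y j) = x i * y i + x j * y j - (x i * y j + y i * x j) :=
    fun i j => by ring
  simp only [h, sum_sub_distrib, sum_add_distrib, sum_const, card_univ, nsmul_eq_mul,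
    ← Finset.mul_sum, ← Finset.sum_mul]
  ring

lemma sum_sum_ketBra_sub [Fintype κ] (a : κ → ι → ℂ) :
    ∑ i, ∑ j, ketBra (a i - a j) =
      (2 * Fintype.card κ : ℂ) • ∑ i, ketBra (a i) - (2 : ℂ) • ketBra (∑ i, a i) := by
  ext p q
  simp only [ketBra_apply, Matrix.sum_apply, Pi.sub_apply, map_sub, Matrix.sub_apply,
    Matrix.smul_apply, Finset.sum_apply, map_sum, smul_eq_mul, sum_sum_sub_mul_sub]
  ring

end KetBra

section SeparableCone

variable {ι : Type*} [Fintype ι]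

def densityMatrices (ι : Type*) [Fintype ι] : Set (Matrix ι ι ℂ) :=
  {σ | σ.PosSemidef ∧ σ.trace = 1}

noncomputable def separableCone (ι : Type*) [Fintype ι] :
    PointedCone ℝ (Matrix (ι × ι) (ι × ι) ℂ) :=
  PointedCone.hull ℝ (Set.image2 (· ⊗ₖ ·) (densityMatrices ι) (densityMatrices ι))

lemma isSeparableState_of_mem_separableCone {d : ℕ} [NeZero d]
    {ρ : Matrix (ZMod d × ZMod d) (ZMod d × ZMod d) ℂ} (hρ : ρ ∈ separableCone (ZMod d))
    (htr : ρ.trace = 1) : IsSeparableState ρ := by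
  obtain ⟨k, w, g, rfl⟩ := Submodule.mem_span_set'.mp hρ
  choose σ hσ τ hτ hg using fun i => (g i).2
  have hg' : ∀ i, (g i : Matrix _ _ ℂ) = σ i ⊗ₖ τ i := fun i => (hg i).symm
  refine ⟨k, fun i => w i, σ, τ, fun i => (w i).2, ?_, hσ, hτ, by simp [hg']⟩
  simp only [hg', trace_sum, trace_smul, trace_kronecker, (hσ _).2, (hτ _).2, mul_one] at htr
  simpa [← Nonneg.coe_smul] using congrArg Complex.re htr

lemma inv_trace_smul_mem_densityMatrices {σ : Matrix ι ι ℂ} (hσ : σ.PosSemidef)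
    (h : σ.trace ≠ 0) : σ.trace⁻¹ • σ ∈ densityMatrices ι :=
  ⟨hσ.smul (inv_nonneg.mpr hσ.trace_nonneg), by rw [trace_smul, smul_eq_mul, inv_mul_cancel₀ h]⟩

lemma kronecker_mem_separableCone {σ τ : Matrix ι ι ℂ} (hσ : σ.PosSemidef)
    (hτ : τ.PosSemidef) : σ ⊗ₖ τ ∈ separableCone ι := by
  rcases eq_or_ne σ.trace 0 with h | h
  · simp [hσ.trace_eq_zero_iff.mp h]
  rcases eq_or_ne τ.trace 0 with h' | h'
  · simp [hτ.trace_eq_zero_iff.mp h']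
  obtain ⟨s, hs, hs'⟩ :=
    RCLike.nonneg_iff_exists_ofReal.mp (mul_nonneg hσ.trace_nonneg hτ.trace_nonneg)
  have hrescale : σ ⊗ₖ τ = s • ((σ.trace⁻¹ • σ) ⊗ₖ (τ.trace⁻¹ • τ)) := by
    rw [smul_kronecker, kronecker_smul, smul_smul, RCLike.real_smul_eq_coe_smul (K := ℂ) s,
      smul_smul, hs', mul_mul_mul_comm, mul_inv_cancel₀ h, mul_inv_cancel₀ h', one_mul, one_smul]
  rw [hrescale]
  exact (separableCone ι).smul_mem hs <| PointedCone.subset_hull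
    ⟨_, inv_trace_smul_mem_densityMatrices hσ h, _, inv_trace_smul_mem_densityMatrices hτ h', rfl⟩

lemma diagonal_mem_separableCone [DecidableEq ι] {w : ι × ι → ℝ} (hw : ∀ p, 0 ≤ w p) :
    diagonal (fun p => (w p : ℂ)) ∈ separableCone ι := by
  have hsum : diagonal (fun p => (w p : ℂ)) =
      ∑ p, w p • (ketBra (Pi.single p.1 1) ⊗ₖ ketBra (Pi.single p.2 1)) := by
    simp only [ketBra_single, diagonal_kronecker_diagonal, single_mul_single_apply]
    ext p q
    simp [Matrix.sum_apply, diagonal_apply, Pi.single_apply]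
  rw [hsum]
  exact sum_mem fun p _ => (separableCone ι).smul_mem (hw p)
    (kronecker_mem_separableCone (ketBra_posSemidef _) (ketBra_posSemidef _))

end SeparableCone

section PairTerm

variable {ι : Type*} [Fintype ι] [DecidableEq ι]

noncomputable def maxEntangled (ι : Type*) [Fintype ι] [DecidableEq ι] : ι × ι → ℂ :=
  ∑ i, Pi.single (i, i) 1

lemma maxEntangled_apply (p : ι × ι) :
    maxEntangled ι p = if p.1 = p.2 then 1 else 0 := by
  obtain ⟨p₁, p₂⟩ := p
  simp only [maxEntangled, Finset.sum_apply, Pi.single_apply, Prod.ext_iff]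
  split_ifs with h
  · subst h; simp
  · exact Finset.sum_eq_zero fun i _ => if_neg fun hi => h (hi.1.trans hi.2.symm)

lemma sum_ketBra_single_diag :
    ∑ i : ι, ketBra (Pi.single (i, i) 1) = diagonal (maxEntangled ι) := by
  simp only [ketBra_single, maxEntangled, ← diagonalAddMonoidHom_apply, map_sum]

noncomputable def pairTerm (i j : ι) : Matrix (ι × ι) (ι × ι) ℂ :=
  ketBra (Pi.single (i, i) 1 - Pi.single (j, j) 1) + ketBra (Pi.single (j, i) 1) +
    ketBra (Pi.single (i, j) 1)

lemma tensor_single_add_smul_single {κ : Type*} [DecidableEq κ] {b : ℂ} (hb : b * conj b = 1)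
    (i j : κ) :
    (fun p : κ × κ => (Pi.single i 1 + b • Pi.single j 1 : κ → ℂ) p.1 *
      (Pi.single i 1 - conj b • Pi.single j 1 : κ → ℂ) p.2) =
    (Pi.single (i, i) 1 - Pi.single (j, j) 1) + b • Pi.single (j, i) 1 +
      conj b • -Pi.single (i, j) 1 := by
  funext p
  simp only [Pi.add_apply, Pi.sub_apply, Pi.smul_apply, Pi.neg_apply, smul_eq_mul,
    ← single_mul_single_apply]
  linear_combination (-((Pi.single j 1 : κ → ℂ) p.1 * (Pi.single j 1 : κ → ℂ) p.2)) * hb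

lemma pairTerm_mem_separableCone (i j : ι) : pairTerm i j ∈ separableCone ι := by
  have hphase : ∀ k : ℕ, I ^ k * conj (I ^ k) = 1 := fun k => by rw [mul_conj, map_pow]; simp
  have havg : pairTerm i j = (4⁻¹ : ℝ) • ∑ k : Fin 4,
      ketBra (Pi.single i 1 + I ^ (k : ℕ) • Pi.single j 1) ⊗ₖ
        ketBra (Pi.single i 1 - conj (I ^ (k : ℕ)) • Pi.single j 1) := by
    simp only [ketBra_kronecker_ketBra, tensor_single_add_smul_single (hphase _),
      sum_ketBra_fourthRoots, ketBra_neg, pairTerm, RCLike.real_smul_eq_coe_smul (K := ℂ),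
      smul_smul]
    norm_num
  rw [havg]
  exact (separableCone ι).smul_mem (by norm_num) <| sum_mem fun k _ =>
    kronecker_mem_separableCone (ketBra_posSemidef _) (ketBra_posSemidef _)

lemma sum_sum_pairTerm_mem_separableCone :
    ∑ i : ι, ∑ j, (if i = j then 0 else pairTerm i j) ∈ separableCone ι :=
  sum_mem fun i _ => sum_mem fun j _ => by
    split_ifs
    exacts [zero_mem _, pairTerm_mem_separableCone i j]

lemma sum_sum_pairTerm :
    ∑ i : ι, ∑ j, (if i = j then 0 else pairTerm i j) =
      (2 : ℂ) • (((Fintype.card ι : ℂ) - 1) • diagonal (maxEntangled ι) + 1 -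
        ketBra (maxEntangled ι)) := by
  have hdiag : ∀ i : ι, pairTerm i i = (2 : ℂ) • ketBra (Pi.single (i, i) 1) := fun i => by
    simp only [pairTerm, sub_self, ketBra_zero, zero_add, two_smul]
  have hsplit : ∀ i j : ι, (if i = j then 0 else pairTerm i j) =
      pairTerm i j - if i = j then pairTerm i j else 0 := fun i j => by split_ifs <;> simp
  have hsingle : ∑ i : ι, ∑ j : ι, ketBra (Pi.single (i, j) 1) = 1 := by
    rw [← sum_ketBra_single, Fintype.sum_prod_type]
  rw [sum_congr rfl fun i _ => sum_congr rfl fun j _ => hsplit i j]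
  simp only [sum_sub_distrib, sum_ite_eq, mem_univ, if_true, hdiag, ← smul_sum]
  simp only [pairTerm, sum_add_distrib, sum_sum_ketBra_sub, hsingle]
  rw [Finset.sum_comm (f := fun i j => ketBra (Pi.single (j, i) (1 : ℂ))), hsingle,
    sum_ketBra_single_diag, ← maxEntangled]
  module

lemma diagonal_add_smul_eq_diagonal_add_smul_sum_pairTerm (D : ι × ι → ℂ) (c : ℝ) :
    diagonal D + (c : ℂ) • (ketBra (maxEntangled ι) - diagonal (maxEntangled ι)) =
      diagonal (fun p => D p + c * if p.1 = p.2 then (Fintype.card ι - 1 : ℂ) else 1) +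
        (-c / 2) • ∑ i, ∑ j, (if i = j then 0 else pairTerm i j) := by
  rw [sum_sum_pairTerm]
  ext p q
  simp only [Matrix.add_apply, Matrix.smul_apply, Matrix.sub_apply, diagonal_apply, ketBra_apply,
    maxEntangled_apply, one_apply, Complex.real_smul, smul_eq_mul]
  split_ifs <;> simp_all
  ring

end PairTerm

lemma eq_diagonal_add_smul_maxEntangled {G : Type*} [AddCommGroup G] [Fintype G] [DecidableEq G]
    {ρ : Matrix (G × G) (G × G) ℂ} {c : ℂ}
    (hsupp : ∀ j1 j2 k1 k2 : G, j2 - j1 ≠ k2 - k1 → ρ (j1, j2) (k1, k2) = 0)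
    (hval : ∀ k : G, k ≠ 0 → ∀ n1 n2 : G,
        ρ (n1, n2) (n1 + k, n2 + k) = c * (if n1 = n2 then 1 else 0)) :
    ρ = diagonal (fun p => ρ p p) + c • (ketBra (maxEntangled G) - diagonal (maxEntangled G)) := by
  ext ⟨p₁, p₂⟩ ⟨q₁, q₂⟩
  simp only [Matrix.add_apply, Matrix.smul_apply, Matrix.sub_apply, diagonal_apply, ketBra_apply,
    maxEntangled_apply, smul_eq_mul]
  by_cases hM : p₂ - p₁ = q₂ - q₁
  · obtain ⟨k, rfl, rfl⟩ : ∃ k, q₁ = p₁ + k ∧ q₂ = p₂ + k :=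
      ⟨q₁ - p₁, by abel, by rw [← sub_add_cancel q₂ q₁, ← hM]; abel⟩
    rcases eq_or_ne k 0 with rfl | hk
    · simp only [add_zero]
      split_ifs <;> simp
    · rw [hval k hk]
      split_ifs <;> simp_all
  · have hne : ¬(p₁ = q₁ ∧ p₂ = q₂) := by
      rintro ⟨rfl, rfl⟩
      exact hM rfl
    have hoff : ¬(p₁ = p₂ ∧ q₁ = q₂) := by
      rintro ⟨rfl, rfl⟩
      simp at hM
    rw [hsupp _ _ _ _ hM]
    rcases not_and_or.mp hoff with h | h <;> simp [hne, h]

theorem special_case_negative_c_general (d : ℕ) [NeZero d] (hd : d.Prime)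
    (c : ℝ) (hc : c < 0)
    (ρ : Matrix (ZMod d × ZMod d) (ZMod d × ZMod d) ℂ)
    (hρ : ρ.PosSemidef ∧ ρ.trace = 1)
    (hsupp : ∀ j1 j2 k1 k2 : ZMod d, j2 - j1 ≠ k2 - k1 → ρ (j1, j2) (k1, k2) = 0)
    (hval : ∀ k : ZMod d, k ≠ 0 → ∀ n1 n2 : ZMod d,
        ρ (n1, n2) (n1 + k, n2 + k) = (c : ℂ) * (if n1 = n2 then 1 else 0))
    (hdiag : ∀ i : ZMod d × ZMod d, |c| * ((d : ℝ) - 1) ≤ (ρ i i).re) :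
    IsSeparableState ρ := by
  refine isSeparableState_of_mem_separableCone ?_ hρ.2
  rw [eq_diagonal_add_smul_maxEntangled hsupp hval,
    diagonal_add_smul_eq_diagonal_add_smul_sum_pairTerm]
  have hweights : ∀ p : ZMod d × ZMod d,
      0 ≤ (ρ p p).re + c * if p.1 = p.2 then ((d : ℝ) - 1) else 1 := fun p => by
    have h2 : (2 : ℝ) ≤ d := by exact_mod_cast hd.two_le
    have hp := abs_of_neg hc ▸ hdiag p
    split_ifs <;> nlinarith
  refine add_mem ?_ <| (separableCone _).smul_mem (by linarith) sum_sum_pairTerm_mem_separableCone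
  convert diagonal_mem_separableCone hweights using 3 with p
  rw [ZMod.card]
  split_ifs <;> push_cast <;> rw [show ((ρ p p).re : ℂ) = ρ p p from hρ.1.1.coe_re_apply_self p]

/-- For `d` an odd prime, `c < 0`, and `ρ` a bipartite
density supported in `M` with `ρ_{n1 n2,(n1+k)(n2+k)} = c δ(n1,n2)` for `k ≠ 0`:
if every diagonal entry of `ρ` is at least `|c|(d−1)`, then `ρ` is separable. -/
theorem special_case_negative_c (d : ℕ) [NeZero d] (hd : d.Prime) (hodd : Odd d)
    (c : ℝ) (hc : c < 0)
    (ρ : Matrix (ZMod d × ZMod d) (ZMod d × ZMod d) ℂ)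
    (hρ : ρ.PosSemidef ∧ ρ.trace = 1)
    (hsupp : ∀ j1 j2 k1 k2 : ZMod d, j2 - j1 ≠ k2 - k1 → ρ (j1, j2) (k1, k2) = 0)
    (hval : ∀ k : ZMod d, k ≠ 0 → ∀ n1 n2 : ZMod d,
        ρ (n1, n2) (n1 + k, n2 + k) = (c : ℂ) * (if n1 = n2 then 1 else 0))
    (hdiag : ∀ i : ZMod d × ZMod d, |c| * ((d : ℝ) - 1) ≤ (ρ i i).re) :
    IsSeparableState ρ :=
  special_case_negative_c_general d hd c hc ρ hρ hsupp hval hdiag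
end

section
/- Let d be an odd prime and ρ a bipartite density supported in M such that for every k ≠ 0 and all n1, n2 ∈ Z_d, ρ_{n1 n2, (n1+k)(n2+k)} = c_{n2−n1}, where c_r (r ∈ Z_d) are real constants with c_r ≥ 0 for every r. If Σ_{r∈Z_d} c_r ≤ min over all diagonal entries of ρ, then ρ is separable. -/
open Matrix Kronecker
open scoped ComplexOrder

/-!
Write `ψ` for the standard additive character of `ZMod d`, `u_{ab}(n) = ψ(an + bn²)` for the
quadratic chirps and `v_{rab}(n) = ψ(-(a(n - r) + b(n - r)²))` for their shifted conjugates. Then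
`ρ = D + Σ_r c_r Π_r`, where `D` is diagonal with entries `ρ_{nn} - Σ_r c_r ≥ 0`, a mixture of
product basis states, and `Π_r = d⁻² Σ_{a,b} |u_{ab}⟩⟨u_{ab}| ⊗ |v_{rab}⟩⟨v_{rab}|`.
Orthogonality of characters in `a` and in `b` makes the `((n₁, n₂), (m₁, m₂))` entry of `Π_r`
equal to `1` if `n₁ - m₁ = n₂ - m₂ = -k` and `2k(r - (n₂ - n₁)) = 0`, and `0` otherwise. As `ZMod d` is a field of odd characteristic,
that is the diagonal together with the entries `k ≠ 0` at difference `n₂ - n₁ = r`: exactly the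
pattern that `c_r` occupies in `ρ`.
-/

local notation "ψ" => ZMod.stdAddChar

abbrev IsDensity {n : Type*} [Fintype n] (σ : Matrix n n ℂ) : Prop :=
  σ.PosSemidef ∧ σ.trace = 1

theorem isDensity_single {n : Type*} [Fintype n] [DecidableEq n] (i : n) :
    IsDensity (single i i (1 : ℂ)) := by
  refine ⟨?_, trace_single_eq_same _ _⟩
  rw [single_eq_single_vecMulVec_single]
  simpa [Pi.single_star] using posSemidef_vecMulVec_self_star (Pi.single i (1 : ℂ))

theorem isDensity_inv_card_smul_vecMulVec {n : Type*} [Fintype n] [Nonempty n] {v : n → ℂ}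
    (hv : ∀ i, ‖v i‖ = 1) : IsDensity ((Fintype.card n : ℂ)⁻¹ • vecMulVec v (star v)) := by
  refine ⟨(posSemidef_vecMulVec_self_star v).smul (by positivity), ?_⟩
  have hvv : v ⬝ᵥ star v = Fintype.card n := by
    simp [dotProduct, Complex.mul_conj, Complex.normSq_eq_norm_sq, hv]
  rw [trace_smul, trace_vecMulVec, hvv, smul_eq_mul]
  exact inv_mul_cancel₀ (Nat.cast_ne_zero.2 Fintype.card_ne_zero)

theorem sum_smul_single_kronecker_single {m n α : Type*} [Fintype m] [Fintype n] [DecidableEq m]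
    [DecidableEq n] [Semiring α] (w : m × n → α) :
    ∑ p : m × n, w p • (single p.1 p.1 (1 : α) ⊗ₖ single p.2 p.2 1) = diagonal w := by
  simp only [single_kronecker_single, mul_one, smul_single, smul_eq_mul]
  exact sum_single_eq_diagonal w

theorem sq_sub_sq_sub_sq_sub_sq_eq_zero_iff {R : Type*} [CommRing R] [IsDomain R]
    (h2 : (2 : R) ≠ 0) {n₁ n₂ m₁ m₂ r : R} (h : n₁ - m₁ = n₂ - m₂) :
    n₁ ^ 2 - m₁ ^ 2 - ((n₂ - r) ^ 2 - (m₂ - r) ^ 2) = 0 ↔ n₁ = m₁ ∨ r = n₂ - n₁ := by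
  obtain rfl : m₂ = n₂ - n₁ + m₁ := by linear_combination h
  rw [show n₁ ^ 2 - m₁ ^ 2 - ((n₂ - r) ^ 2 - (n₂ - n₁ + m₁ - r) ^ 2)
      = 2 * (n₁ - m₁) * (r - (n₂ - n₁)) by ring]
  simp [h2, sub_eq_zero]

theorem isSeparableState_of_eq_sum {d : ℕ} [NeZero d] {ι : Type*} [Fintype ι]
    {ρ : Matrix (ZMod d × ZMod d) (ZMod d × ZMod d) ℂ} (hρ : ρ.trace = 1)
    (w : ι → ℝ) (σ τ : ι → Matrix (ZMod d) (ZMod d) ℂ) (hw : ∀ i, 0 ≤ w i)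
    (hσ : ∀ i, IsDensity (σ i)) (hτ : ∀ i, IsDensity (τ i))
    (h : ρ = ∑ i, (w i : ℂ) • (σ i ⊗ₖ τ i)) : IsSeparableState ρ := by
  have hw₁ : ∑ i, w i = 1 := by
    have : ρ.trace = ∑ i, (w i : ℂ) := by
      simp [h, trace_sum, trace_kronecker, (hσ _).2, (hτ _).2]
    exact_mod_cast this.symm.trans hρ
  let e := (Fintype.equivFin ι).symm
  refine ⟨Fintype.card ι, w ∘ e, σ ∘ e, τ ∘ e, fun i => hw _, ?_, fun i => hσ _,
    fun i => hτ _, ?_⟩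
  · rwa [Function.comp_def, Equiv.sum_comp e w]
  · rw [h]; exact (Equiv.sum_comp e _).symm

namespace ZMod

variable {d : ℕ} [NeZero d]

theorem norm_stdAddChar (x : ZMod d) : ‖ψ x‖ = 1 := Circle.norm_coe _

theorem star_stdAddChar (x : ZMod d) : star (ψ x) = ψ (-x) := by
  rw [AddChar.map_neg_eq_inv]
  exact (Complex.inv_eq_conj (norm_stdAddChar x)).symm

theorem sum_stdAddChar_mul (s : ZMod d) :
    ∑ a : ZMod d, ψ (a * s) = if s = 0 then (d : ℂ) else 0 := by
  rw [AddChar.sum_mulShift s (isPrimitive_stdAddChar d), card]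
  split_ifs <;> simp

theorem sum_sum_stdAddChar_mul_add_mul (s t : ZMod d) :
    ∑ a : ZMod d, ∑ b : ZMod d, ψ (a * s + b * t) =
      if s = 0 ∧ t = 0 then (d : ℂ) ^ 2 else 0 := by
  simp only [AddChar.map_add_eq_mul, ← Finset.mul_sum, ← Finset.sum_mul, sum_stdAddChar_mul]
  split_ifs <;> simp_all [sq]

end ZMod

section PhaseStates

variable {d : ℕ} [NeZero d]

noncomputable def phaseState (f : ZMod d → ZMod d) : Matrix (ZMod d) (ZMod d) ℂ :=
  (Fintype.card (ZMod d) : ℂ)⁻¹ • vecMulVec (fun n => ψ (f n)) (star fun n => ψ (f n))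

theorem isDensity_phaseState (f : ZMod d → ZMod d) : IsDensity (phaseState f) :=
  isDensity_inv_card_smul_vecMulVec fun n => ZMod.norm_stdAddChar (f n)

theorem phaseState_apply (f : ZMod d → ZMod d) (n m : ZMod d) :
    phaseState f n m = (d : ℂ)⁻¹ * ψ (f n - f m) := by
  simp [phaseState, vecMulVec_apply, ZMod.star_stdAddChar, sub_eq_add_neg,
    AddChar.map_add_eq_mul]

def quadPhase (a b : ZMod d) (n : ZMod d) : ZMod d := a * n + b * n ^ 2

theorem sum_phaseState_kronecker_apply (r n₁ n₂ m₁ m₂ : ZMod d) :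
    (∑ a, ∑ b, phaseState (quadPhase a b) ⊗ₖ phaseState (fun n => -quadPhase a b (n - r)))
        (n₁, n₂) (m₁, m₂) =
      if n₁ - m₁ - (n₂ - m₂) = 0 ∧ n₁ ^ 2 - m₁ ^ 2 - ((n₂ - r) ^ 2 - (m₂ - r) ^ 2) = 0
      then 1 else 0 := by
  have hphase (a b : ZMod d) :
      quadPhase a b n₁ - quadPhase a b m₁ + (-quadPhase a b (n₂ - r) - -quadPhase a b (m₂ - r)) =
        a * (n₁ - m₁ - (n₂ - m₂)) + b * (n₁ ^ 2 - m₁ ^ 2 - ((n₂ - r) ^ 2 - (m₂ - r) ^ 2)) := by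
    unfold quadPhase; ring
  have hd : (d : ℂ) ≠ 0 := Nat.cast_ne_zero.2 (NeZero.ne d)
  simp only [Matrix.sum_apply, kroneckerMap_apply, phaseState_apply, mul_mul_mul_comm,
    ← AddChar.map_add_eq_mul, hphase, ← Finset.mul_sum, ZMod.sum_sum_stdAddChar_mul_add_mul]
  split_ifs
  · field_simp
  · simp

theorem sum_smul_phaseState_kronecker_apply [Fact d.Prime] (h2 : (2 : ZMod d) ≠ 0)
    (c : ZMod d → ℂ) (n₁ n₂ m₁ m₂ : ZMod d) :
    (∑ x : ZMod d × ZMod d × ZMod d, c x.1 • (phaseState (quadPhase x.2.1 x.2.2) ⊗ₖ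
        phaseState (fun n => -quadPhase x.2.1 x.2.2 (n - x.1)))) (n₁, n₂) (m₁, m₂) =
      if n₁ - m₁ = n₂ - m₂ then (if n₁ = m₁ then ∑ r, c r else c (n₂ - n₁)) else 0 := by
  simp only [Fintype.sum_prod_type, ← Finset.smul_sum]
  rw [Matrix.sum_apply]
  simp only [Matrix.smul_apply, sum_phaseState_kronecker_apply, smul_eq_mul, mul_ite, mul_one,
    mul_zero]
  by_cases hs : n₁ - m₁ = n₂ - m₂
  · simp only [if_pos hs, sub_eq_zero.2 hs, true_and, sq_sub_sq_sub_sq_sub_sq_eq_zero_iff h2 hs]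
    by_cases hnm : n₁ = m₁ <;> simp [hnm]
  · simp [hs, sub_eq_zero]

theorem eq_sum_single_kronecker_add_sum_phaseState_kronecker [Fact d.Prime]
    (h2 : (2 : ZMod d) ≠ 0) {ρ : Matrix (ZMod d × ZMod d) (ZMod d × ZMod d) ℂ}
    (hρ : ρ.IsHermitian)
    (hsupp : ∀ j1 j2 k1 k2 : ZMod d, j2 - j1 ≠ k2 - k1 → ρ (j1, j2) (k1, k2) = 0)
    (c : ZMod d → ℝ)
    (hval : ∀ k : ZMod d, k ≠ 0 → ∀ n1 n2 : ZMod d,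
        ρ (n1, n2) (n1 + k, n2 + k) = (c (n2 - n1) : ℂ)) :
    ρ = ∑ p : ZMod d × ZMod d,
          (((ρ p p).re - ∑ r, c r : ℝ) : ℂ) • (single p.1 p.1 1 ⊗ₖ single p.2 p.2 1) +
        ∑ x : ZMod d × ZMod d × ZMod d, (c x.1 : ℂ) • (phaseState (quadPhase x.2.1 x.2.2) ⊗ₖ
          phaseState (fun n => -quadPhase x.2.1 x.2.2 (n - x.1))) := by
  ext ⟨n₁, n₂⟩ ⟨m₁, m₂⟩
  rw [Matrix.add_apply, sum_smul_single_kronecker_single, diagonal_apply]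
  simp only [sum_smul_phaseState_kronecker_apply h2 fun r => (c r : ℂ)]
  by_cases hnm : (n₁, n₂) = (m₁, m₂)
  · obtain ⟨rfl, rfl⟩ := Prod.ext_iff.1 hnm
    rw [if_pos rfl, if_pos (by rw [sub_self, sub_self]), if_pos rfl, Complex.ofReal_sub,
      Complex.ofReal_sum, sub_add_cancel]
    exact (hρ.coe_re_apply_self _).symm
  by_cases hs : n₁ - m₁ = n₂ - m₂
  · have hn₁ : n₁ ≠ m₁ := fun h => hnm (Prod.ext h (by linear_combination h - hs))
    rw [if_neg hnm, if_pos hs, if_neg hn₁, zero_add]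
    have := hval (m₁ - n₁) (sub_ne_zero.2 (Ne.symm hn₁)) n₁ n₂
    rwa [add_sub_cancel, show n₂ + (m₁ - n₁) = m₂ by linear_combination -hs] at this
  · rw [if_neg hnm, if_neg hs, zero_add]
    exact hsupp _ _ _ _ fun h => hs (by linear_combination -h)

end PhaseStates

/-- For `d` an odd prime and `ρ` a bipartite density
supported in `M` with `ρ_{n1 n2,(n1+k)(n2+k)} = c_{n2−n1}` for `k ≠ 0`, where
the real constants `c_r` are all nonnegative: if `Σ_r c_r` is at most every
diagonal entry of `ρ`, then `ρ` is separable. -/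
theorem general_nonneg_case_separable (d : ℕ) [NeZero d] (hd : d.Prime) (hodd : Odd d)
    (ρ : Matrix (ZMod d × ZMod d) (ZMod d × ZMod d) ℂ)
    (hρ : ρ.PosSemidef ∧ ρ.trace = 1)
    (hsupp : ∀ j1 j2 k1 k2 : ZMod d, j2 - j1 ≠ k2 - k1 → ρ (j1, j2) (k1, k2) = 0)
    (c : ZMod d → ℝ) (hc : ∀ r, 0 ≤ c r)
    (hval : ∀ k : ZMod d, k ≠ 0 → ∀ n1 n2 : ZMod d,
        ρ (n1, n2) (n1 + k, n2 + k) = (c (n2 - n1) : ℂ))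
    (hdiag : ∀ i : ZMod d × ZMod d, (∑ r : ZMod d, c r) ≤ (ρ i i).re) :
    IsSeparableState ρ := by
  have : Fact d.Prime := ⟨hd⟩
  have h2 : (2 : ZMod d) ≠ 0 :=
    Ring.two_ne_zero (by rw [ZMod.ringChar_zmod_n]; rintro rfl; exact absurd hodd (by decide))
  refine isSeparableState_of_eq_sum (ι := (ZMod d × ZMod d) ⊕ (ZMod d × ZMod d × ZMod d)) hρ.2
    (Sum.elim (fun p => (ρ p p).re - ∑ r, c r) fun x => c x.1)
    (Sum.elim (fun p => single p.1 p.1 1) fun x => phaseState (quadPhase x.2.1 x.2.2))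
    (Sum.elim (fun p => single p.2 p.2 1) fun x =>
      phaseState fun n => -quadPhase x.2.1 x.2.2 (n - x.1))
    (Sum.forall.2 ⟨fun p => sub_nonneg.2 (hdiag p), fun x => hc x.1⟩)
    (Sum.forall.2 ⟨fun _ => isDensity_single _, fun _ => isDensity_phaseState _⟩)
    (Sum.forall.2 ⟨fun _ => isDensity_single _, fun _ => isDensity_phaseState _⟩) ?_
  rw [Fintype.sum_sum_type]
  exact eq_sum_single_kronecker_add_sum_phaseState_kronecker h2 hρ.1.isHermitian hsupp c hval
end
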